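/- Let D ≥ 1. For prefix weights μ_1, …, μ_D ∈ ℝ, an affine model f(x) = b + Σ_j w_j x_j, and vectors x^t, x^0 ∈ ℝ^D, define the value function v(S) = f(y) with y_j = x^t_j for j ∈ S and y_j = x^0_j otherwise, and the attribution s_i^μ = Σ_{k=i}^D μ_k·( v({1,…,k}) − v({1,…,k}∖{i}) ), where the coalitions range over the physically admissible prefix trajectories {1,…,k} containing i. Then the sum rule Σ_{i=1}^D s_i^μ = v({1,…,D}) − v(∅) holds for every choice of b ∈ ℝ, w ∈ ℝ^D, x^t and x^0 if and only if Σ_{k=i}^D μ_k = 1 for every i = 1,…,D, equivalently μ_D = 1 and μ_k = 0 for all k < D. In that case s_i^μ = w_i·(x^t_i − x^0_i), which coincides with the closed-form trajectory Shapley value f(x^t_{1:i}, x^0_{(i+1):D}) − f(x^t_{1:(i−1)}, x^0_{i:D}); i.e., the weighting is uniquely determined by the sum rule and yields the closed form. -/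

import Mathlib

/-- The hybrid vector `hyb D xt x0 i` agrees with the test input `xt` on the
(1-indexed) coordinates `1..i` and with the baseline `x0` on coordinates `i+1..D`. -/
def hyb (D : ℕ) (xt x0 : Fin D → ℝ) (i : ℕ) : Fin D → ℝ :=
  fun j => if (j : ℕ) < i then xt j else x0 j

/-- The physically admissible prefix trajectory `{1, …, k}`, as a subset of the
0-indexed coordinates `Fin D`. -/
def prefixSet (D k : ℕ) : Finset (Fin D) :=
  Finset.univ.filter (fun j => (j : ℕ) < k)

/-- The baseline-imputed value function: `v(S) = f(y)` where `y` agrees with `xt`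
on coordinates in `S` and with `x0` on the complement of `S`. -/
def vfun {D : ℕ} (f : (Fin D → ℝ) → ℝ) (xt x0 : Fin D → ℝ) (S : Finset (Fin D)) : ℝ :=
  f (fun j => if j ∈ S then xt j else x0 j)

/-- The prefix-weighted attribution
`s_i^μ = ∑_{k=i}^D μ_k·(v({1,…,k}) − v({1,…,k}∖{i}))`, where `i : Fin D`
denotes the item with 1-index `i + 1`, so the admissible prefixes containing it
are `{1,…,k}` for `k = i+1, …, D`. -/
def sMu {D : ℕ} (μ : ℕ → ℝ) (f : (Fin D → ℝ) → ℝ) (xt x0 : Fin D → ℝ)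
    (i : Fin D) : ℝ :=
  ∑ k ∈ Finset.Icc ((i : ℕ) + 1) D,
    μ k * (vfun f xt x0 (prefixSet D k) - vfun f xt x0 (prefixSet D k \ {i}))

/-! On an affine model `f x = b + ∑ j, w j * x j` every marginal contribution
`v(S) − v(S ∖ {i})` with `i ∈ S` equals `w i * (x^t_i − x^0_i)`, because the two imputed
inputs differ only in coordinate `i`. Hence `s_i^μ` is this contribution times the tail
weight `∑_{k > i} μ_k`, while `v(full) − v(∅) = ∑_i w i * (x^t_i − x^0_i)`. Testing the sum
rule on `w = e_i`, `x^t = 1`, `x^0 = 0` isolates one tail weight at a time, so the sum rule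
holds exactly when every tail weight is `1`, and consecutive tails then force
`μ_D = 1` and `μ_k = 0` for `k < D`. -/

open Finset

lemma affine_sub_affine_of_eq_off {ι : Type*} [Fintype ι] (b : ℝ) (w y y' : ι → ℝ) (i : ι)
    (h : ∀ j, j ≠ i → y j = y' j) :
    (b + ∑ j, w j * y j) - (b + ∑ j, w j * y' j) = w i * (y i - y' i) := by
  rw [add_sub_add_left_eq_sub, ← sum_sub_distrib, sum_eq_single i]
  · ring
  · intro j _ hj
    rw [h j hj, sub_self]
  · simp

section AffineModel

variable {D : ℕ} (b : ℝ) (w xt x0 : Fin D → ℝ)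

lemma vfun_affine_sub_erase {S : Finset (Fin D)} {i : Fin D} (hi : i ∈ S) :
    vfun (fun x => b + ∑ j, w j * x j) xt x0 S
      - vfun (fun x => b + ∑ j, w j * x j) xt x0 (S \ {i})
    = w i * (xt i - x0 i) := by
  rw [vfun, vfun, affine_sub_affine_of_eq_off b w _ _ i fun j hj => by simp [hj]]
  simp [hi]

lemma vfun_affine_univ_sub_empty :
    vfun (fun x => b + ∑ j, w j * x j) xt x0 univ
      - vfun (fun x => b + ∑ j, w j * x j) xt x0 ∅
    = ∑ j, w j * (xt j - x0 j) := by
  simp [vfun, mul_sub, sum_sub_distrib]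

lemma sMu_affine (μ : ℕ → ℝ) (i : Fin D) :
    sMu μ (fun x => b + ∑ j, w j * x j) xt x0 i
      = (∑ k ∈ Icc ((i : ℕ) + 1) D, μ k) * (w i * (xt i - x0 i)) := by
  rw [sMu, sum_mul]
  refine sum_congr rfl fun k hk => ?_
  have hik : i ∈ prefixSet D k := mem_filter.mpr ⟨mem_univ i, (mem_Icc.mp hk).1⟩
  rw [vfun_affine_sub_erase b w xt x0 hik]

lemma affine_hyb_succ_sub_hyb (i : Fin D) :
    (fun x : Fin D → ℝ => b + ∑ j, w j * x j) (hyb D xt x0 ((i : ℕ) + 1))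
      - (fun x : Fin D → ℝ => b + ∑ j, w j * x j) (hyb D xt x0 (i : ℕ))
    = w i * (xt i - x0 i) := by
  refine (affine_sub_affine_of_eq_off b w _ _ i fun j hj => ?_).trans (by simp [hyb])
  have hji : (j : ℕ) ≠ i := Fin.val_ne_of_ne hj
  simp only [hyb, Nat.lt_succ_iff_lt_or_eq, hji, or_false]

end AffineModel

lemma sum_rule_affine_iff {D : ℕ} (μ : ℕ → ℝ) :
    (∀ (b : ℝ) (w xt x0 : Fin D → ℝ),
        ∑ i : Fin D, sMu μ (fun x => b + ∑ j, w j * x j) xt x0 i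
          = vfun (fun x => b + ∑ j, w j * x j) xt x0 univ
            - vfun (fun x => b + ∑ j, w j * x j) xt x0 ∅)
      ↔ ∀ i, 1 ≤ i → i ≤ D → ∑ k ∈ Icc i D, μ k = 1 := by
  simp only [sMu_affine, vfun_affine_univ_sub_empty]
  constructor
  · intro H i hi hiD
    obtain ⟨i, rfl⟩ : ∃ i' : Fin D, (i' : ℕ) + 1 = i := ⟨⟨i - 1, by omega⟩, by simp; omega⟩
    simpa [Pi.single_apply] using H 0 (Pi.single i 1) 1 0
  · intro H b w xt x0
    exact sum_congr rfl fun i _ => by rw [H _ (by omega) i.isLt, one_mul]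

lemma tail_sums_eq_one_iff {D : ℕ} (hD : 1 ≤ D) (μ : ℕ → ℝ) :
    (∀ i, 1 ≤ i → i ≤ D → ∑ k ∈ Icc i D, μ k = 1)
      ↔ μ D = 1 ∧ ∀ k, 1 ≤ k → k < D → μ k = 0 := by
  constructor
  · intro H
    refine ⟨by simpa using H D hD le_rfl, fun k hk hkD => ?_⟩
    have hsplit := H k hk hkD.le
    rw [← insert_Icc_add_one_left_eq_Icc hkD.le, sum_insert (by simp), H (k + 1) (by omega) hkD]
      at hsplit
    linarith
  · rintro ⟨hμD, hμ⟩ i hi hiD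
    rw [sum_eq_single D (fun k hk hkD => hμ k (by grind) (by grind)) (by simp [hiD]), hμD]

/-- **Uniqueness of the prefix weighting under the sum rule (affine models).**
The sum rule `∑_i s_i^μ = v({1,…,D}) − v(∅)` holds for every affine model and all
`x^t, x^0` iff `∑_{k=i}^D μ_k = 1` for every `i = 1, …, D`, which holds iff
`μ_D = 1` and `μ_k = 0` for `1 ≤ k < D`.  In that case
`s_i^μ = w_i·(x^t_i − x^0_i)`, coinciding with the closed-form trajectory
Shapley value `f(x^t_{1:i}, x^0_{(i+1):D}) − f(x^t_{1:(i−1)}, x^0_{i:D})`. -/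
theorem trajectory_shapley_unique_weights (D : ℕ) (hD : 1 ≤ D) (μ : ℕ → ℝ) :
    ((∀ (b : ℝ) (w xt x0 : Fin D → ℝ),
        ∑ i : Fin D, sMu μ (fun x => b + ∑ j, w j * x j) xt x0 i
          = vfun (fun x => b + ∑ j, w j * x j) xt x0 Finset.univ
            - vfun (fun x => b + ∑ j, w j * x j) xt x0 ∅)
        ↔ (∀ i, 1 ≤ i → i ≤ D → ∑ k ∈ Finset.Icc i D, μ k = 1))
    ∧ ((∀ i, 1 ≤ i → i ≤ D → ∑ k ∈ Finset.Icc i D, μ k = 1)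
        ↔ (μ D = 1 ∧ ∀ k, 1 ≤ k → k < D → μ k = 0))
    ∧ ((∀ i, 1 ≤ i → i ≤ D → ∑ k ∈ Finset.Icc i D, μ k = 1) →
        ∀ (b : ℝ) (w xt x0 : Fin D → ℝ) (i : Fin D),
          sMu μ (fun x => b + ∑ j, w j * x j) xt x0 i = w i * (xt i - x0 i)
          ∧ sMu μ (fun x => b + ∑ j, w j * x j) xt x0 i
            = (fun x : Fin D → ℝ => b + ∑ j, w j * x j) (hyb D xt x0 ((i : ℕ) + 1))
              - (fun x : Fin D → ℝ => b + ∑ j, w j * x j) (hyb D xt x0 (i : ℕ))) := by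
  refine ⟨sum_rule_affine_iff μ, tail_sums_eq_one_iff hD μ, fun H b w xt x0 i => ?_⟩
  have hs : sMu μ (fun x => b + ∑ j, w j * x j) xt x0 i = w i * (xt i - x0 i) := by
    rw [sMu_affine, H _ (by omega) i.isLt, one_mul]
  exact ⟨hs, hs.trans (affine_hyb_succ_sub_hyb b w xt x0 i).symm⟩
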